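/- arXiv:2306.08515 — 3 statements merged into one kernel-verified Lean document; each statement's English description precedes it below -/
import Mathlib

section
/- Let X be a Banach space and P : X → X a linear projection with the property that for every ε > 0 there exists δ > 0 such that for all x with ‖x‖ = 1 and ‖P x‖ > 1 - δ one has ‖x - P x‖ < ε. Then ‖P‖ ≤ 1, i.e., P is a contraction. -/
/-- A linear projection `P` on a Banach space such that vectors of norm one
whose image under `P` has norm close to one are close to their image, is a contraction. -/
theorem projection_norm_le_one {𝕜 X : Type*} [RCLike 𝕜] [NormedAddCommGroup X]
    [NormedSpace 𝕜 X] [CompleteSpace X] (P : X →L[𝕜] X) (hproj : ∀ x, P (P x) = P x)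
    (h : ∀ ε > (0 : ℝ), ∃ δ > (0 : ℝ), ∀ x : X, ‖x‖ = 1 → 1 - δ < ‖P x‖ → ‖x - P x‖ < ε) :
    ‖P‖ ≤ 1 := by
  have key : ∀ x : X, ‖x‖ = 1 → ‖P x‖ ≤ 1 := by
    intro x hx
    by_contra hlt
    push_neg at hlt
    have hclose : ∀ ε > (0 : ℝ), ‖x - P x‖ < ε := by
      intro ε hε
      obtain ⟨δ, hδ, hδ'⟩ := h ε hε
      exact hδ' x hx (by linarith)
    have h0 : ‖x - P x‖ = 0 := by
      by_contra h0
      have hpos : 0 < ‖x - P x‖ := lt_of_le_of_ne (norm_nonneg _) (Ne.symm h0)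
      exact lt_irrefl _ (hclose _ hpos)
    have : x = P x := sub_eq_zero.mp (norm_eq_zero.mp h0)
    rw [← this] at hlt
    linarith [hx]
  apply P.opNorm_le_bound zero_le_one
  intro x
  rcases eq_or_ne x 0 with rfl | hx0
  · simp
  · have hxn : ‖x‖ ≠ 0 := norm_ne_zero_iff.mpr hx0
    have hunit : ‖((‖x‖⁻¹ : ℝ) : 𝕜) • x‖ = 1 := by
      rw [norm_smul, RCLike.norm_ofReal, abs_inv, abs_norm]
      field_simp
    have := key _ hunit
    rw [map_smul, norm_smul, RCLike.norm_ofReal, abs_inv, abs_norm] at this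
    have hpos : 0 < ‖x‖ := hxn.lt_of_le' (norm_nonneg x)
    rw [inv_mul_le_iff₀ hpos] at this
    linarith
end

section
/- Let X be a Banach space and P : X → X a linear projection with ‖P‖ ≤ 1. Suppose that for every ε > 0 there exists δ > 0 such that for all x with ‖x‖ = 1 and ‖x + P x‖ > 2 - δ one has ‖x - P x‖ < ε. Then for every ε > 0 there exists δ' > 0 such that for all x ∈ X with ‖x‖ ≤ 1 and ‖x‖ - ‖P x‖ < δ' one has ‖x - P x‖ < ε. -/
/-- Theorem 3.5 (a) ⇒ (b) of the paper, for a single projection. -/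
theorem uniformly_convex_projection_a_implies_b {𝕜 X : Type*} [RCLike 𝕜]
    [NormedAddCommGroup X] [NormedSpace 𝕜 X] [CompleteSpace X] (P : X →L[𝕜] X)
    (hproj : ∀ x, P (P x) = P x) (hnorm : ‖P‖ ≤ 1)
    (h : ∀ ε > (0 : ℝ), ∃ δ > (0 : ℝ), ∀ x : X, ‖x‖ = 1 → 2 - δ < ‖x + P x‖ → ‖x - P x‖ < ε) :
    ∀ ε > (0 : ℝ), ∃ δ' > (0 : ℝ), ∀ x : X, ‖x‖ ≤ 1 → ‖x‖ - ‖P x‖ < δ' → ‖x - P x‖ < ε := by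
  intro ε hε
  obtain ⟨δ, hδ, hd⟩ := h ε hε
  refine ⟨δ * ε / 6, by positivity, fun x hx1 hx2 => ?_⟩
  have hPx : ‖P x‖ ≤ ‖x‖ := by
    calc ‖P x‖ ≤ ‖P‖ * ‖x‖ := P.le_opNorm x
      _ ≤ 1 * ‖x‖ := by gcongr
      _ = ‖x‖ := one_mul _
  by_cases hcase : ‖x‖ ≤ ε / 3
  · calc ‖x - P x‖ ≤ ‖x‖ + ‖P x‖ := norm_sub_le _ _
      _ ≤ ‖x‖ + ‖x‖ := by linarith
      _ < ε := by linarith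
  · push_neg at hcase
    have hx0 : (0:ℝ) < ‖x‖ := lt_trans (by positivity) hcase
    set c : 𝕜 := (‖x‖ : 𝕜)⁻¹ with hc
    have hnc : ‖c‖ = ‖x‖⁻¹ := by
      rw [hc, norm_inv, RCLike.norm_ofReal, abs_of_pos hx0]
    have hy1 : ‖c • x‖ = 1 := by
      rw [norm_smul, hnc]; field_simp
    have hsum : 2 * ‖P x‖ ≤ ‖x + P x‖ := by
      have h2 : P (x + P x) = (2:𝕜) • P x := by
        simp [map_add, hproj, two_smul]
      calc 2 * ‖P x‖ = ‖P (x + P x)‖ := by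
            rw [h2, norm_smul]
            norm_num
        _ ≤ ‖P‖ * ‖x + P x‖ := P.le_opNorm _
        _ ≤ 1 * ‖x + P x‖ := by gcongr
        _ = ‖x + P x‖ := one_mul _
    have key : 2 - δ < ‖c • x + P (c • x)‖ := by
      rw [map_smul, ← smul_add, norm_smul, hnc, inv_mul_eq_div, lt_div_iff₀ hx0]
      nlinarith
    have hfin := hd (c • x) hy1 key
    rw [map_smul, ← smul_sub, norm_smul, hnc] at hfin
    calc ‖x - P x‖ = ‖x‖ * (‖x‖⁻¹ * ‖x - P x‖) := by field_simp
      _ ≤ 1 * (‖x‖⁻¹ * ‖x - P x‖) := by gcongr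
      _ < ε := by rw [one_mul]; exact hfin
end

section
/- Let H be a complex Hilbert space, u a trace-class operator on H, and K a closed subspace of H with orthogonal projection P_K. Then ‖u P_{K^⊥}‖₁² + ‖u P_K‖₁² ≤ ‖u‖₁², where ‖·‖₁ denotes the trace norm. -/
/-!
Call a finite family `x` sub-orthonormal if its Gram matrix is at most the identity, i.e. `x` is
the image of an orthonormal family under a contraction. For sub-orthonormal `x`, `y` one still
has `∑ |⟪u xᵢ, yᵢ⟫| ≤ ‖u‖₁`: choose an orthonormal basis `w` of `span x` on which `u` acts with
orthogonal images (a singular value decomposition), expand each `xᵢ` in `w`, and bound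
`∑ᵢ |⟪w_r, xᵢ⟫| |⟪u w_r, yᵢ⟫| ≤ ‖u w_r‖` by Cauchy–Schwarz and Bessel; the normalised `u w_r`
then show `∑_r ‖u w_r‖ ≤ ‖u‖₁`.

Given orthonormal frames `(e, f)` for `u P_{K^⊥}` and `(e', f')` for `u P_K` and `α² + β² ≤ 1`,
the families `P_{K^⊥} e ⊔ P_K e'` and `α f ⊔ β f'` are sub-orthonormal, because the two
projections have orthogonal ranges. Hence `α ‖u P_{K^⊥}‖₁ + β ‖u P_K‖₁ ≤ ‖u‖₁`, and choosing
`(α, β)` proportional to `(‖u P_{K^⊥}‖₁, ‖u P_K‖₁)` gives the claim.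
-/

open scoped ENNReal

/-- The trace norm of an operator on a Hilbert space, defined as the supremum over
finite orthonormal families `(e i)`, `(f i)` of `∑ i |⟪u (e i), f i⟫|` (valued in
`ℝ≥0∞`; it is finite exactly for trace-class operators). -/
noncomputable def traceNorm {H : Type*} [NormedAddCommGroup H] [InnerProductSpace ℂ H]
    (u : H →L[ℂ] H) : ℝ≥0∞ :=
  ⨆ (n : ℕ) (e : Fin n → H) (f : Fin n → H) (_ : Orthonormal ℂ e) (_ : Orthonormal ℂ f),
    ∑ i, (‖(inner ℂ (u (e i)) (f i) : ℂ)‖₊ : ℝ≥0∞)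

open scoped InnerProductSpace NNReal ComplexConjugate

section InnerProductSpace

variable {𝕜 : Type*} [RCLike 𝕜] {E F : Type*} [NormedAddCommGroup E] [InnerProductSpace 𝕜 E]
  [NormedAddCommGroup F] [InnerProductSpace 𝕜 F] {ι κ : Type*} [Fintype ι] [Fintype κ]

variable (𝕜) in
def SubOrthonormal (x : ι → E) : Prop :=
  ∀ c : ι → 𝕜, ‖∑ i, c i • x i‖ ^ 2 ≤ ∑ i, ‖c i‖ ^ 2

theorem Orthonormal.norm_sum_smul_sq {x : ι → E} (hx : Orthonormal 𝕜 x) (c : ι → 𝕜) :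
    ‖∑ i, c i • x i‖ ^ 2 = ∑ i, ‖c i‖ ^ 2 := by
  have h := hx.inner_sum c c Finset.univ
  simp only [RCLike.conj_mul, inner_self_eq_norm_sq_to_K] at h
  exact_mod_cast h

theorem Orthonormal.subOrthonormal {x : ι → E} (hx : Orthonormal 𝕜 x) : SubOrthonormal 𝕜 x :=
  fun c => (hx.norm_sum_smul_sq c).le

namespace SubOrthonormal

theorem map {x : ι → E} (hx : SubOrthonormal 𝕜 x) (T : E →L[𝕜] F) (hT : ‖T‖ ≤ 1) :
    SubOrthonormal 𝕜 (T ∘ x) := fun c => by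
  simp only [Function.comp_apply, ← map_smul, ← map_sum]
  calc ‖T (∑ i, c i • x i)‖ ^ 2 ≤ ‖∑ i, c i • x i‖ ^ 2 := by
        gcongr
        simpa using T.le_of_opNorm_le hT (∑ i, c i • x i)
    _ ≤ ∑ i, ‖c i‖ ^ 2 := hx c

theorem sumElim {x : ι → E} {y : κ → E} (hx : SubOrthonormal 𝕜 x) (hy : SubOrthonormal 𝕜 y)
    (hxy : ∀ i j, ⟪x i, y j⟫_𝕜 = 0) : SubOrthonormal 𝕜 (Sum.elim x y) := fun c => by
  have horth : ⟪∑ i, c (.inl i) • x i, ∑ j, c (.inr j) • y j⟫_𝕜 = 0 := by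
    simp [sum_inner, inner_sum, inner_smul_left, inner_smul_right, hxy]
  have hpyth := norm_add_sq_eq_norm_sq_add_norm_sq_of_inner_eq_zero _ _ horth
  have hX := hx (c ∘ .inl)
  have hY := hy (c ∘ .inr)
  simp only [Fintype.sum_sum_type, Sum.elim_inl, Sum.elim_inr, Function.comp_apply, sq]
    at hpyth hX hY ⊢
  linarith

theorem sumElim_smul {x : ι → E} {y : κ → E} (hx : SubOrthonormal 𝕜 x)
    (hy : SubOrthonormal 𝕜 y) {a b : 𝕜} (hab : ‖a‖ ^ 2 + ‖b‖ ^ 2 ≤ 1) :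
    SubOrthonormal 𝕜 (Sum.elim (a • x) (b • y)) := fun c => by
  set X := ∑ i, c (.inl i) • x i
  set Y := ∑ j, c (.inr j) • y j
  have hsum : ∑ k, c k • Sum.elim (a • x) (b • y) k = a • X + b • Y := by
    simp only [Fintype.sum_sum_type, Sum.elim_inl, Sum.elim_inr, Pi.smul_apply, X, Y,
      Finset.smul_sum, smul_comm a, smul_comm b]
  have htri : ‖a • X + b • Y‖ ≤ ‖a‖ * ‖X‖ + ‖b‖ * ‖Y‖ :=
    (norm_add_le _ _).trans_eq (by rw [norm_smul, norm_smul])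
  have hX := hx (c ∘ .inl)
  have hY := hy (c ∘ .inr)
  simp only [Function.comp_apply] at hX hY
  rw [hsum, Fintype.sum_sum_type]
  -- Cauchy–Schwarz in `ℝ²`: `(‖a‖‖X‖ + ‖b‖‖Y‖)² ≤ (‖a‖² + ‖b‖²)(‖X‖² + ‖Y‖²)`
  nlinarith [sq_nonneg (‖a‖ * ‖Y‖ - ‖b‖ * ‖X‖), norm_nonneg (a • X + b • Y),
    mul_nonneg (norm_nonneg a) (norm_nonneg X), mul_nonneg (norm_nonneg b) (norm_nonneg Y),
    sq_nonneg ‖X‖, sq_nonneg ‖Y‖]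

theorem sum_norm_inner_sq_le {x : ι → E} (hx : SubOrthonormal 𝕜 x) (φ : E) :
    ∑ i, ‖⟪φ, x i⟫_𝕜‖ ^ 2 ≤ ‖φ‖ ^ 2 := by
  set S := ∑ i, ‖⟪φ, x i⟫_𝕜‖ ^ 2
  set v := ∑ i, ⟪x i, φ⟫_𝕜 • x i
  have hS : ⟪φ, v⟫_𝕜 = (S : 𝕜) := by
    simp only [v, S, inner_sum, inner_smul_right, RCLike.ofReal_sum]
    refine Finset.sum_congr rfl fun i _ => ?_
    rw [← inner_conj_symm (x i) φ, RCLike.conj_mul, RCLike.ofReal_pow]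
  have hv : ‖v‖ ^ 2 ≤ S := by simpa only [norm_inner_symm] using hx fun i => ⟪x i, φ⟫_𝕜
  have hSv : S ≤ ‖φ‖ * ‖v‖ := by
    have := norm_inner_le_norm (𝕜 := 𝕜) φ v
    rwa [hS, RCLike.norm_ofReal, abs_of_nonneg (by positivity)] at this
  nlinarith [norm_nonneg φ, norm_nonneg v, sq_nonneg (‖φ‖ - ‖v‖)]

theorem sum_norm_inner_mul_norm_inner_le {x : ι → E} {y : ι → F} (hx : SubOrthonormal 𝕜 x)
    (hy : SubOrthonormal 𝕜 y) (φ : E) (χ : F) :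
    ∑ i, ‖⟪φ, x i⟫_𝕜‖ * ‖⟪χ, y i⟫_𝕜‖ ≤ ‖φ‖ * ‖χ‖ := by
  refine (abs_le_of_sq_le_sq' ?_ (by positivity)).2
  calc (∑ i, ‖⟪φ, x i⟫_𝕜‖ * ‖⟪χ, y i⟫_𝕜‖) ^ 2
      ≤ (∑ i, ‖⟪φ, x i⟫_𝕜‖ ^ 2) * ∑ i, ‖⟪χ, y i⟫_𝕜‖ ^ 2 :=
        Finset.sum_mul_sq_le_sq_mul_sq _ _ _
    _ ≤ ‖φ‖ ^ 2 * ‖χ‖ ^ 2 := by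
        gcongr
        · exact hx.sum_norm_inner_sq_le φ
        · exact hy.sum_norm_inner_sq_le χ
    _ = (‖φ‖ * ‖χ‖) ^ 2 := (mul_pow _ _ _).symm

theorem sum_norm_inner_le_sum_norm {V : Submodule 𝕜 E} (b : OrthonormalBasis κ 𝕜 V)
    (u : E →ₗ[𝕜] F) {x : ι → E} {y : ι → F} (hx : SubOrthonormal 𝕜 x) (hy : SubOrthonormal 𝕜 y)
    (hxV : ∀ i, x i ∈ V) : ∑ i, ‖⟪u (x i), y i⟫_𝕜‖ ≤ ∑ r, ‖u (b r)‖ := by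
  have hexpand : ∀ i, ⟪u (x i), y i⟫_𝕜 = ∑ r, conj ⟪(b r : E), x i⟫_𝕜 * ⟪u (b r), y i⟫_𝕜 := by
    intro i
    have h := congrArg (fun z : V => u z) (b.sum_repr' ⟨x i, hxV i⟩)
    simp only [Submodule.coe_sum, Submodule.coe_smul, map_sum, map_smul] at h
    rw [← h, sum_inner]
    simp only [inner_smul_left, Submodule.coe_inner]
  calc ∑ i, ‖⟪u (x i), y i⟫_𝕜‖
      ≤ ∑ i, ∑ r, ‖⟪(b r : E), x i⟫_𝕜‖ * ‖⟪u (b r), y i⟫_𝕜‖ := by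
        gcongr with i
        rw [hexpand]
        refine (norm_sum_le _ _).trans_eq ?_
        simp only [norm_mul, RCLike.norm_conj]
    _ = ∑ r, ∑ i, ‖⟪(b r : E), x i⟫_𝕜‖ * ‖⟪u (b r), y i⟫_𝕜‖ := Finset.sum_comm
    _ ≤ ∑ r, ‖(b r : E)‖ * ‖u (b r)‖ := by
        gcongr with r
        exact hx.sum_norm_inner_mul_norm_inner_le hy _ _
    _ = ∑ r, ‖u (b r)‖ := by simp only [Submodule.norm_coe, b.norm_eq_one, one_mul]

end SubOrthonormal

theorem orthonormal_smul_inv_norm {ι : Type*} {v : ι → E}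
    (hv : Pairwise fun i j => ⟪v i, v j⟫_𝕜 = 0) (hv0 : ∀ i, v i ≠ 0) :
    Orthonormal 𝕜 fun i => ((‖v i‖⁻¹ : ℝ) : 𝕜) • v i := by
  refine ⟨fun i => ?_, fun i j hij => ?_⟩
  · rw [norm_smul, RCLike.norm_ofReal, abs_inv, abs_norm,
      inv_mul_cancel₀ (norm_ne_zero_iff.2 (hv0 i))]
  · dsimp only
    rw [inner_smul_left, inner_smul_right, hv hij, mul_zero, mul_zero]

theorem LinearMap.exists_orthonormalBasis_pairwise_inner_map_eq_zero (u : E →ₗ[𝕜] F)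
    (V : Submodule 𝕜 E) [FiniteDimensional 𝕜 V] :
    ∃ (n : ℕ) (b : OrthonormalBasis (Fin n) 𝕜 V),
      Pairwise fun r q => ⟪u (b r), u (b q)⟫_𝕜 = 0 := by
  let v : V →ₗ[𝕜] V.map u := u.submoduleMap V
  have hT : (v.adjoint ∘ₗ v).IsSymmetric := v.isPositive_adjoint_comp_self.isSymmetric
  refine ⟨_, hT.eigenvectorBasis rfl, fun r q hrq => ?_⟩
  change ⟪v (hT.eigenvectorBasis rfl r), v (hT.eigenvectorBasis rfl q)⟫_𝕜 = 0
  rw [← LinearMap.adjoint_inner_left, ← LinearMap.comp_apply, hT.apply_eigenvectorBasis rfl r,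
    inner_smul_left, (hT.eigenvectorBasis rfl).orthonormal.2 hrq, mul_zero]

end InnerProductSpace

theorem NNReal.sq_add_sq_le_sq_of_forall {a b c : ℝ≥0}
    (h : ∀ α β : ℝ≥0, α ^ 2 + β ^ 2 ≤ 1 → α * a + β * b ≤ c) : a ^ 2 + b ^ 2 ≤ c ^ 2 := by
  set d := NNReal.sqrt (a ^ 2 + b ^ 2)
  have hd : d ^ 2 = a ^ 2 + b ^ 2 := NNReal.sq_sqrt _
  rcases eq_or_ne d 0 with hd0 | hd0
  · rw [← hd, hd0]
    simp
  have hdc : d ≤ c := by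
    convert h (a / d) (b / d)
      (by rw [div_pow, div_pow, ← add_div, ← hd, div_self (pow_ne_zero 2 hd0)]) using 1
    field_simp
    exact hd
  rw [← hd]
  gcongr

theorem ENNReal.sq_add_sq_le_sq_of_forall {a b c : ℝ≥0∞}
    (h : ∀ α β : ℝ≥0, α ^ 2 + β ^ 2 ≤ 1 → α * a + β * b ≤ c) : a ^ 2 + b ^ 2 ≤ c ^ 2 := by
  rcases eq_or_ne c ⊤ with rfl | hc
  · simp
  have ha : a ≤ c := by simpa using h 1 0 (by norm_num)
  have hb : b ≤ c := by simpa using h 0 1 (by norm_num)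
  lift c to ℝ≥0 using hc
  lift a to ℝ≥0 using ne_top_of_le_ne_top coe_ne_top ha
  lift b to ℝ≥0 using ne_top_of_le_ne_top coe_ne_top hb
  exact_mod_cast NNReal.sq_add_sq_le_sq_of_forall fun α β hαβ => by exact_mod_cast h α β hαβ

section TraceNorm

variable {H : Type*} [NormedAddCommGroup H] [InnerProductSpace ℂ H] {ι : Type*} [Fintype ι]

theorem sum_nnnorm_inner_le_traceNorm (u : H →L[ℂ] H) {e f : ι → H} (he : Orthonormal ℂ e)
    (hf : Orthonormal ℂ f) : ∑ i, (‖⟪u (e i), f i⟫_ℂ‖₊ : ℝ≥0∞) ≤ traceNorm u := by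
  let σ := (Fintype.equivFin ι).symm
  rw [← σ.sum_comp]
  exact le_iSup_of_le (Fintype.card ι) <| le_iSup_of_le (e ∘ σ) <| le_iSup_of_le (f ∘ σ) <|
    le_iSup_of_le (he.comp σ σ.injective) <| le_iSup_of_le (hf.comp σ σ.injective) le_rfl

variable (H) in
structure OrthonormalPair where
  n : ℕ
  e : Fin n → H
  f : Fin n → H
  he : Orthonormal ℂ e
  hf : Orthonormal ℂ f

instance : Nonempty (OrthonormalPair H) :=
  ⟨⟨0, Fin.elim0, Fin.elim0, .of_isEmpty _, .of_isEmpty _⟩⟩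

theorem traceNorm_eq_iSup (u : H →L[ℂ] H) :
    traceNorm u = ⨆ p : OrthonormalPair H, ∑ i, (‖⟪u (p.e i), p.f i⟫_ℂ‖₊ : ℝ≥0∞) :=
  le_antisymm
    (iSup_le fun n => iSup_le fun e => iSup_le fun f => iSup_le fun he => iSup_le fun hf =>
      le_iSup_of_le ⟨n, e, f, he, hf⟩ le_rfl)
    (iSup_le fun p => sum_nnnorm_inner_le_traceNorm u p.he p.hf)

theorem sum_nnnorm_le_traceNorm_of_pairwise_inner_eq_zero (u : H →L[ℂ] H) {w : ι → H}
    (hw : Orthonormal ℂ w) (huw : Pairwise fun r q => ⟪u (w r), u (w q)⟫_ℂ = 0) :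
    ∑ r, (‖u (w r)‖₊ : ℝ≥0∞) ≤ traceNorm u := by
  classical
  let s := Finset.univ.filter fun r => u (w r) ≠ 0
  have hψ : Orthonormal ℂ fun r : s => ((‖u (w r)‖⁻¹ : ℝ) : ℂ) • u (w r) :=
    orthonormal_smul_inv_norm (fun r q hrq => huw (Subtype.coe_injective.ne hrq))
      fun r => (Finset.mem_filter.1 r.2).2
  calc ∑ r, (‖u (w r)‖₊ : ℝ≥0∞) = ∑ r ∈ s, (‖u (w r)‖₊ : ℝ≥0∞) :=
        (Finset.sum_filter_of_ne fun r _ h => by simpa using h).symm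
    _ = ∑ r : s, (‖⟪u (w r), ((‖u (w r)‖⁻¹ : ℝ) : ℂ) • u (w r)⟫_ℂ‖₊ : ℝ≥0∞) := by
        rw [← Finset.sum_coe_sort]
        refine Finset.sum_congr rfl fun r _ => ?_
        have hr : ⟪u (w r), ((‖u (w r)‖⁻¹ : ℝ) : ℂ) • u (w r)⟫_ℂ = (‖u (w r)‖ : ℂ) := by
          rw [inner_smul_right, inner_self_eq_norm_sq_to_K]
          push_cast
          rw [inv_mul_eq_div, sq]
          exact mul_self_div_self _
        rw [hr, Complex.nnnorm_real, nnnorm_norm]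
    _ ≤ traceNorm u := sum_nnnorm_inner_le_traceNorm u (hw.comp _ Subtype.val_injective) hψ

theorem SubOrthonormal.sum_nnnorm_inner_le_traceNorm (u : H →L[ℂ] H) {x y : ι → H}
    (hx : SubOrthonormal ℂ x) (hy : SubOrthonormal ℂ y) :
    ∑ i, (‖⟪u (x i), y i⟫_ℂ‖₊ : ℝ≥0∞) ≤ traceNorm u := by
  have := FiniteDimensional.span_of_finite ℂ (Set.finite_range x)
  obtain ⟨n, b, hb⟩ := (u : H →ₗ[ℂ] H).exists_orthonormalBasis_pairwise_inner_map_eq_zero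
    (Submodule.span ℂ (Set.range x))
  have h := hx.sum_norm_inner_le_sum_norm b u hy fun i => Submodule.subset_span ⟨i, rfl⟩
  calc ∑ i, (‖⟪u (x i), y i⟫_ℂ‖₊ : ℝ≥0∞) ≤ ∑ r, (‖u (b r)‖₊ : ℝ≥0∞) := by
        rw [← ENNReal.ofNNReal_finsetSum, ← ENNReal.ofNNReal_finsetSum, ENNReal.coe_le_coe,
          ← NNReal.coe_le_coe]
        push_cast
        exact h
    _ ≤ traceNorm u := sum_nnnorm_le_traceNorm_of_pairwise_inner_eq_zero u
        (b.orthonormal.comp_linearIsometry (Submodule.span ℂ (Set.range x)).subtypeₗᵢ) hb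

theorem mul_traceNorm_comp_add_mul_traceNorm_comp_le (u : H →L[ℂ] H) {A B : H →L[ℂ] H}
    (hA : ‖A‖ ≤ 1) (hB : ‖B‖ ≤ 1) (hAB : ∀ z z', ⟪A z, B z'⟫_ℂ = 0) {α β : ℝ≥0}
    (hαβ : α ^ 2 + β ^ 2 ≤ 1) :
    α * traceNorm (u ∘L A) + β * traceNorm (u ∘L B) ≤ traceNorm u := by
  rw [traceNorm_eq_iSup (u ∘L A), traceNorm_eq_iSup (u ∘L B), ENNReal.mul_iSup,
    ENNReal.mul_iSup]
  refine ENNReal.iSup_add_iSup_le fun p q => ?_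
  have hx : SubOrthonormal ℂ (Sum.elim (A ∘ p.e) (B ∘ q.e)) :=
    (p.he.subOrthonormal.map A hA).sumElim (q.he.subOrthonormal.map B hB) fun _ _ => hAB _ _
  have hy : SubOrthonormal ℂ (Sum.elim (((α : ℝ) : ℂ) • p.f) (((β : ℝ) : ℂ) • q.f)) :=
    p.hf.subOrthonormal.sumElim_smul q.hf.subOrthonormal <| by
      simp only [Complex.norm_real, Real.norm_eq_abs, NNReal.abs_eq]
      exact_mod_cast hαβ
  refine le_of_eq_of_le ?_ (hx.sum_nnnorm_inner_le_traceNorm u hy)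
  simp [Fintype.sum_sum_type, Finset.mul_sum]

theorem traceNorm_comp_sq_add_sq_le (u : H →L[ℂ] H) {A B : H →L[ℂ] H} (hA : ‖A‖ ≤ 1)
    (hB : ‖B‖ ≤ 1) (hAB : ∀ z z', ⟪A z, B z'⟫_ℂ = 0) :
    traceNorm (u ∘L A) ^ 2 + traceNorm (u ∘L B) ^ 2 ≤ traceNorm u ^ 2 :=
  ENNReal.sq_add_sq_le_sq_of_forall fun _ _ =>
    mul_traceNorm_comp_add_mul_traceNorm_comp_le u hA hB hAB

end TraceNorm

theorem traceNorm_comp_projection_sq_add_sq_le_general {H : Type*} [NormedAddCommGroup H]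
    [InnerProductSpace ℂ H] (u : H →L[ℂ] H) (K : Submodule ℂ H)
    [K.HasOrthogonalProjection] [Kᗮ.HasOrthogonalProjection] :
    traceNorm (u ∘L (Kᗮ.subtypeL ∘L Kᗮ.orthogonalProjectionOnto)) ^ 2 +
        traceNorm (u ∘L (K.subtypeL ∘L K.orthogonalProjectionOnto)) ^ 2 ≤
      traceNorm u ^ 2 :=
  traceNorm_comp_sq_add_sq_le u Kᗮ.starProjection_norm_le K.starProjection_norm_le
    fun z z' => Submodule.inner_left_of_mem_orthogonal (K.orthogonalProjectionOnto z').2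
      (Kᗮ.orthogonalProjectionOnto z).2

/-- for a trace-class operator `u` and a closed subspace `K` with
orthogonal projection `P_K`, one has `‖u P_{K^⊥}‖₁² + ‖u P_K‖₁² ≤ ‖u‖₁²`. -/
theorem traceNorm_comp_projection_sq_add_sq_le {H : Type*} [NormedAddCommGroup H]
    [InnerProductSpace ℂ H] [CompleteSpace H] (u : H →L[ℂ] H) (K : Submodule ℂ H)
    (hK : IsClosed (K : Set H)) [K.HasOrthogonalProjection]
    [Kᗮ.HasOrthogonalProjection] (htc : traceNorm u ≠ ⊤) :
    traceNorm (u ∘L (Kᗮ.subtypeL ∘L Kᗮ.orthogonalProjectionOnto)) ^ 2 +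
        traceNorm (u ∘L (K.subtypeL ∘L K.orthogonalProjectionOnto)) ^ 2 ≤
      traceNorm u ^ 2 :=
  traceNorm_comp_projection_sq_add_sq_le_general u K
end
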